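/- arXiv:2412.10404 — 2 statements merged into one kernel-verified Lean document; each statement's English description precedes it below -/
import Mathlib

section
/- There exist a finite set Λ ⊂ 𝕊² ∩ ℚ³, for each k ∈ Λ vectors k̄, k̄̄ ∈ ℝ³ such that (k, k̄, k̄̄) is an orthonormal basis of ℝ³, a constant ε > 0, and smooth functions a_k : B_ε(Id) → ℝ defined on the open ball of radius ε centered at the identity in the space of symmetric 3×3 matrices, such that every symmetric 3×3 matrix R with |R − Id| < ε is positive definite and satisfies R = Σ_{k∈Λ} a_k(R)² · (k̄ ⊗ k̄). -/
noncomputable section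

open Set

/-- Points of `ℝ³`. -/
abbrev V3 := Fin 3 → ℝ

/-- Frobenius norm of a `3 × 3` matrix. -/
def frob (M : Fin 3 → Fin 3 → ℝ) : ℝ :=
  Real.sqrt (∑ i, ∑ j, (M i j) ^ 2)

/-- The `3 × 3` identity matrix, as a function. -/
def idMat : Fin 3 → Fin 3 → ℝ := fun i j => if i = j then 1 else 0

/-- A symmetric matrix is positive definite. -/
def PosDefMat (M : Fin 3 → Fin 3 → ℝ) : Prop :=
  ∀ v : V3, v ≠ 0 → 0 < ∑ i, ∑ j, v i * M i j * v j

namespace GeomAux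

/-- The nine rational directions `k`. -/
def kk : Fin 9 → V3 :=
  ![![0,1,0], ![0,0,1], ![1,0,0],
    ![4/5,-3/5,0], ![4/5,3/5,0],
    ![4/5,0,-3/5], ![4/5,0,3/5],
    ![0,4/5,-3/5], ![0,4/5,3/5]]

/-- The corresponding `k̄`. -/
def vv : Fin 9 → V3 :=
  ![![1,0,0], ![0,1,0], ![0,0,1],
    ![3/5,4/5,0], ![3/5,-4/5,0],
    ![3/5,0,4/5], ![3/5,0,-4/5],
    ![0,3/5,4/5], ![0,3/5,-4/5]]

/-- The corresponding `k̄̄`. -/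
def ww : Fin 9 → V3 :=
  ![![0,0,1], ![1,0,0], ![0,1,0],
    ![0,0,1], ![0,0,1],
    ![0,1,0], ![0,1,0],
    ![1,0,0], ![1,0,0]]

/-- The coefficient functions `a_k²`. -/
def gg : Fin 9 → (Fin 3 → Fin 3 → ℝ) → ℝ :=
  ![fun R => R 0 0 - 9/50, fun R => R 1 1 - 1/4, fun R => R 2 2 - 8/25,
    fun R => 1/8 + 25/24 * R 0 1, fun R => 1/8 - 25/24 * R 0 1,
    fun R => 1/8 + 25/24 * R 0 2, fun R => 1/8 - 25/24 * R 0 2,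
    fun R => 1/8 + 25/24 * R 1 2, fun R => 1/8 - 25/24 * R 1 2]

@[simp] lemma kk_0 : kk 0 = (![0,1,0] : V3) := rfl
@[simp] lemma kk_1 : kk 1 = (![0,0,1] : V3) := rfl
@[simp] lemma kk_2 : kk 2 = (![1,0,0] : V3) := rfl
@[simp] lemma kk_3 : kk 3 = (![4/5,-3/5,0] : V3) := rfl
@[simp] lemma kk_4 : kk 4 = (![4/5,3/5,0] : V3) := rfl
@[simp] lemma kk_5 : kk 5 = (![4/5,0,-3/5] : V3) := rfl
@[simp] lemma kk_6 : kk 6 = (![4/5,0,3/5] : V3) := rfl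
@[simp] lemma kk_7 : kk 7 = (![0,4/5,-3/5] : V3) := rfl
@[simp] lemma kk_8 : kk 8 = (![0,4/5,3/5] : V3) := rfl
@[simp] lemma vv_0 : vv 0 = (![1,0,0] : V3) := rfl
@[simp] lemma vv_1 : vv 1 = (![0,1,0] : V3) := rfl
@[simp] lemma vv_2 : vv 2 = (![0,0,1] : V3) := rfl
@[simp] lemma vv_3 : vv 3 = (![3/5,4/5,0] : V3) := rfl
@[simp] lemma vv_4 : vv 4 = (![3/5,-4/5,0] : V3) := rfl
@[simp] lemma vv_5 : vv 5 = (![3/5,0,4/5] : V3) := rfl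
@[simp] lemma vv_6 : vv 6 = (![3/5,0,-4/5] : V3) := rfl
@[simp] lemma vv_7 : vv 7 = (![0,3/5,4/5] : V3) := rfl
@[simp] lemma vv_8 : vv 8 = (![0,3/5,-4/5] : V3) := rfl
@[simp] lemma ww_0 : ww 0 = (![0,0,1] : V3) := rfl
@[simp] lemma ww_1 : ww 1 = (![1,0,0] : V3) := rfl
@[simp] lemma ww_2 : ww 2 = (![0,1,0] : V3) := rfl
@[simp] lemma ww_3 : ww 3 = (![0,0,1] : V3) := rfl
@[simp] lemma ww_4 : ww 4 = (![0,0,1] : V3) := rfl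
@[simp] lemma ww_5 : ww 5 = (![0,1,0] : V3) := rfl
@[simp] lemma ww_6 : ww 6 = (![0,1,0] : V3) := rfl
@[simp] lemma ww_7 : ww 7 = (![1,0,0] : V3) := rfl
@[simp] lemma ww_8 : ww 8 = (![1,0,0] : V3) := rfl
@[simp] lemma gg_0 : gg 0 = (fun R => R 0 0 - 9/50 : (Fin 3 → Fin 3 → ℝ) → ℝ) := rfl
@[simp] lemma gg_1 : gg 1 = (fun R => R 1 1 - 1/4 : (Fin 3 → Fin 3 → ℝ) → ℝ) := rfl
@[simp] lemma gg_2 : gg 2 = (fun R => R 2 2 - 8/25 : (Fin 3 → Fin 3 → ℝ) → ℝ) := rfl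
@[simp] lemma gg_3 : gg 3 = (fun R => 1/8 + 25/24 * R 0 1 : (Fin 3 → Fin 3 → ℝ) → ℝ) := rfl
@[simp] lemma gg_4 : gg 4 = (fun R => 1/8 - 25/24 * R 0 1 : (Fin 3 → Fin 3 → ℝ) → ℝ) := rfl
@[simp] lemma gg_5 : gg 5 = (fun R => 1/8 + 25/24 * R 0 2 : (Fin 3 → Fin 3 → ℝ) → ℝ) := rfl
@[simp] lemma gg_6 : gg 6 = (fun R => 1/8 - 25/24 * R 0 2 : (Fin 3 → Fin 3 → ℝ) → ℝ) := rfl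
@[simp] lemma gg_7 : gg 7 = (fun R => 1/8 + 25/24 * R 1 2 : (Fin 3 → Fin 3 → ℝ) → ℝ) := rfl
@[simp] lemma gg_8 : gg 8 = (fun R => 1/8 - 25/24 * R 1 2 : (Fin 3 → Fin 3 → ℝ) → ℝ) := rfl

@[simp] lemma mk9_0 (h : 0 < 9) : (⟨0, h⟩ : Fin 9) = 0 := rfl
@[simp] lemma mk9_1 (h : 1 < 9) : (⟨1, h⟩ : Fin 9) = 1 := rfl
@[simp] lemma mk9_2 (h : 2 < 9) : (⟨2, h⟩ : Fin 9) = 2 := rfl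
@[simp] lemma mk9_3 (h : 3 < 9) : (⟨3, h⟩ : Fin 9) = 3 := rfl
@[simp] lemma mk9_4 (h : 4 < 9) : (⟨4, h⟩ : Fin 9) = 4 := rfl
@[simp] lemma mk9_5 (h : 5 < 9) : (⟨5, h⟩ : Fin 9) = 5 := rfl
@[simp] lemma mk9_6 (h : 6 < 9) : (⟨6, h⟩ : Fin 9) = 6 := rfl
@[simp] lemma mk9_7 (h : 7 < 9) : (⟨7, h⟩ : Fin 9) = 7 := rfl
@[simp] lemma mk9_8 (h : 8 < 9) : (⟨8, h⟩ : Fin 9) = 8 := rfl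
@[simp] lemma mk3_0 (h : 0 < 3) : (⟨0, h⟩ : Fin 3) = 0 := rfl
@[simp] lemma mk3_1 (h : 1 < 3) : (⟨1, h⟩ : Fin 3) = 1 := rfl
@[simp] lemma mk3_2 (h : 2 < 3) : (⟨2, h⟩ : Fin 3) = 2 := rfl
@[simp] lemma fsucc_0_1 : Fin.succ (0 : Fin 1) = (1 : Fin 2) := rfl
@[simp] lemma fsucc_0_2 : Fin.succ (0 : Fin 2) = (1 : Fin 3) := rfl
@[simp] lemma fsucc_1_2 : Fin.succ (1 : Fin 2) = (2 : Fin 3) := rfl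

lemma kk_inj : Function.Injective kk := by
  intro i j h
  fin_cases i <;> fin_cases j <;>
    first
      | rfl
      | (exfalso
         simp only [mk9_0, mk9_1, mk9_2, mk9_3, mk9_4, mk9_5, mk9_6, mk9_7, mk9_8, mk3_0, mk3_1, mk3_2, kk_0, kk_1, kk_2, kk_3, kk_4, kk_5, kk_6, kk_7, kk_8] at h
         have h0 := congrFun h 0
         have h1 := congrFun h 1
         have h2 := congrFun h 2
         revert h0 h1 h2
         norm_num [Matrix.cons_val_two, Matrix.tail_cons, Matrix.head_cons])

/-- Index recovery. -/
def idx (k : V3) : Fin 9 :=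
  if h : ∃ i, kk i = k then h.choose else 0

lemma idx_kk (i : Fin 9) : idx (kk i) = i := by
  have h : ∃ j, kk j = kk i := ⟨i, rfl⟩
  simp only [idx, dif_pos h]
  exact kk_inj h.choose_spec

/-- Pointwise bound from the Frobenius bound. -/
lemma entry_lt {R : Fin 3 → Fin 3 → ℝ} {ε : ℝ}
    (h : frob (fun i j => R i j - idMat i j) < ε) (i j : Fin 3) :
    |R i j - idMat i j| < ε := by
  have hle : (R i j - idMat i j) ^ 2 ≤ ∑ i, ∑ j, (R i j - idMat i j) ^ 2 := by
    have h1 : (R i j - idMat i j) ^ 2 ≤ ∑ j', (R i j' - idMat i j') ^ 2 :=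
      Finset.single_le_sum (f := fun j' => (R i j' - idMat i j') ^ 2)
        (fun _ _ => sq_nonneg _) (Finset.mem_univ j)
    exact h1.trans (Finset.single_le_sum
      (f := fun i' => ∑ j', (R i' j' - idMat i' j') ^ 2)
      (fun _ _ => Finset.sum_nonneg fun _ _ => sq_nonneg _) (Finset.mem_univ i))
  calc |R i j - idMat i j| = Real.sqrt ((R i j - idMat i j) ^ 2) :=
        (Real.sqrt_sq_eq_abs _).symm
    _ ≤ frob (fun i j => R i j - idMat i j) := Real.sqrt_le_sqrt hle
    _ < ε := h

lemma gg_pos {R : Fin 3 → Fin 3 → ℝ}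
    (h : frob (fun i j => R i j - idMat i j) < 1/10) (t : Fin 9) :
    0 < gg t R := by
  have e00 := abs_lt.1 (entry_lt h 0 0)
  have e11 := abs_lt.1 (entry_lt h 1 1)
  have e22 := abs_lt.1 (entry_lt h 2 2)
  have e01 := abs_lt.1 (entry_lt h 0 1)
  have e02 := abs_lt.1 (entry_lt h 0 2)
  have e12 := abs_lt.1 (entry_lt h 1 2)
  rw [show idMat 0 0 = (1:ℝ) from rfl] at e00
  rw [show idMat 1 1 = (1:ℝ) from rfl] at e11
  rw [show idMat 2 2 = (1:ℝ) from rfl] at e22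
  rw [show idMat 0 1 = (0:ℝ) from rfl] at e01
  rw [show idMat 0 2 = (0:ℝ) from rfl] at e02
  rw [show idMat 1 2 = (0:ℝ) from rfl] at e12
  obtain ⟨a00, b00⟩ := e00; obtain ⟨a11, b11⟩ := e11; obtain ⟨a22, b22⟩ := e22
  obtain ⟨a01, b01⟩ := e01; obtain ⟨a02, b02⟩ := e02; obtain ⟨a12, b12⟩ := e12
  fin_cases t <;>
    simp only [mk9_0, mk9_1, mk9_2, mk9_3, mk9_4, mk9_5, mk9_6, mk9_7, mk9_8, mk3_0, mk3_1, mk3_2, gg_0, gg_1, gg_2, gg_3, gg_4, gg_5, gg_6, gg_7, gg_8] <;>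
    linarith

lemma smooth_sqrt_comp {f : (Fin 3 → Fin 3 → ℝ) → ℝ} {s : Set (Fin 3 → Fin 3 → ℝ)}
    (hf : ContDiff ℝ (⊤ : ℕ∞) f) (hpos : ∀ R ∈ s, 0 < f R) :
    ContDiffOn ℝ (⊤ : ℕ∞) (fun R => Real.sqrt (f R)) s := fun R hR =>
  ((Real.contDiffAt_sqrt (ne_of_gt (hpos R hR))).comp R hf.contDiffAt).contDiffWithinAt

lemma entry_smooth (i j : Fin 3) :
    ContDiff ℝ (⊤ : ℕ∞) (fun R : Fin 3 → Fin 3 → ℝ => R i j) :=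
  (ContinuousLinearMap.proj (R := ℝ) (φ := fun _ : Fin 3 => ℝ) j).contDiff.comp
    (ContinuousLinearMap.proj (R := ℝ) (φ := fun _ : Fin 3 => Fin 3 → ℝ) i).contDiff

lemma gg_smooth (t : Fin 9) : ContDiff ℝ (⊤ : ℕ∞) (gg t) := by
  fin_cases t <;>
    simp only [mk9_0, mk9_1, mk9_2, mk9_3, mk9_4, mk9_5, mk9_6, mk9_7, mk9_8, mk3_0, mk3_1, mk3_2, gg_0, gg_1, gg_2, gg_3, gg_4, gg_5, gg_6, gg_7, gg_8] <;>
  first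
    | exact (entry_smooth _ _).sub contDiff_const
    | exact contDiff_const.add (contDiff_const.mul (entry_smooth _ _))
    | exact contDiff_const.sub (contDiff_const.mul (entry_smooth _ _))

end GeomAux

open GeomAux

/-- **Geometric lemma** (Lemma A.1 of the paper, after Beekie–Buckmaster–Vicol).
There are a finite set `Λ ⊂ 𝕊² ∩ ℚ³`, completions `(k, k̄, k̄̄)` of each `k ∈ Λ` to an
orthonormal basis of `ℝ³`, `ε > 0`, and smooth functions `a_k` on the ball `B_ε(Id)` in
the space of symmetric `3 × 3` matrices, such that every symmetric matrix `R` with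
`|R − Id| < ε` is positive definite and satisfies `R = Σ_{k∈Λ} a_k(R)² k̄ ⊗ k̄`. -/
theorem geometric_lemma :
    ∃ (Λ : Finset V3) (kb kbb : V3 → V3) (ε : ℝ)
      (a : V3 → (Fin 3 → Fin 3 → ℝ) → ℝ),
      0 < ε ∧
      (∀ k ∈ Λ, (∑ i, k i * k i) = 1 ∧ ∀ i, ∃ q : ℚ, k i = q) ∧
      (∀ k ∈ Λ,
        (∑ i, kb k i * kb k i) = 1 ∧ (∑ i, kbb k i * kbb k i) = 1 ∧
        (∑ i, k i * kb k i) = 0 ∧ (∑ i, k i * kbb k i) = 0 ∧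
        (∑ i, kb k i * kbb k i) = 0) ∧
      (∀ k ∈ Λ, ContDiffOn ℝ (⊤ : ℕ∞) (a k) {R | frob (fun i j => R i j - idMat i j) < ε}) ∧
      (∀ R : Fin 3 → Fin 3 → ℝ, (∀ i j, R i j = R j i) →
        frob (fun i j => R i j - idMat i j) < ε →
        PosDefMat R ∧
        ∀ i j, R i j = ∑ k ∈ Λ, (a k R) ^ 2 * kb k i * kb k j) := by
  classical
  refine ⟨Finset.image kk Finset.univ,
    fun k => vv (idx k), fun k => ww (idx k), 1/10,
    fun k R => Real.sqrt (gg (idx k) R), by norm_num, ?_, ?_, ?_, ?_⟩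
  · -- k unit and rational
    intro k hk
    obtain ⟨t, -, rfl⟩ := Finset.mem_image.1 hk
    constructor
    · fin_cases t <;>
        norm_num [mk9_0, mk9_1, mk9_2, mk9_3, mk9_4, mk9_5, mk9_6, mk9_7, mk9_8, mk3_0, mk3_1, mk3_2, kk_0, kk_1, kk_2, kk_3, kk_4, kk_5, kk_6, kk_7, kk_8,
          Fin.sum_univ_three, Matrix.cons_val_two, Matrix.tail_cons, Matrix.head_cons]
    · intro i
      fin_cases t <;> fin_cases i <;>
        first
          | (refine ⟨0, ?_⟩; norm_num [Matrix.cons_val_two, Matrix.tail_cons, Matrix.head_cons]; done)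
          | (refine ⟨1, ?_⟩; norm_num [Matrix.cons_val_two, Matrix.tail_cons, Matrix.head_cons]; done)
          | (refine ⟨4/5, ?_⟩; norm_num [Matrix.cons_val_two, Matrix.tail_cons, Matrix.head_cons]; done)
          | (refine ⟨-(3/5), ?_⟩; norm_num [Matrix.cons_val_two, Matrix.tail_cons, Matrix.head_cons]; done)
          | (refine ⟨3/5, ?_⟩; norm_num [Matrix.cons_val_two, Matrix.tail_cons, Matrix.head_cons]; done)
  · -- orthonormality
    intro k hk
    obtain ⟨t, -, rfl⟩ := Finset.mem_image.1 hk
    simp only [idx_kk]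
    fin_cases t <;>
      norm_num [mk9_0, mk9_1, mk9_2, mk9_3, mk9_4, mk9_5, mk9_6, mk9_7, mk9_8, mk3_0, mk3_1, mk3_2, kk_0, kk_1, kk_2, kk_3, kk_4, kk_5, kk_6, kk_7, kk_8,
        vv_0, vv_1, vv_2, vv_3, vv_4, vv_5, vv_6, vv_7, vv_8,
        ww_0, ww_1, ww_2, ww_3, ww_4, ww_5, ww_6, ww_7, ww_8,
        Fin.sum_univ_three, Matrix.cons_val_two, Matrix.tail_cons, Matrix.head_cons]
  · -- smoothness
    intro k hk
    obtain ⟨t, -, rfl⟩ := Finset.mem_image.1 hk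
    simp only [idx_kk]
    exact smooth_sqrt_comp (gg_smooth t) (fun R hR => gg_pos hR t)
  · -- positivity and representation
    intro R hsym hball
    have hsum : ∀ (F : V3 → ℝ),
        ∑ k ∈ Finset.image kk Finset.univ, F k = ∑ t : Fin 9, F (kk t) :=
      fun F => Finset.sum_image (fun a _ b _ h => kk_inj h)
    have hsq : ∀ t : Fin 9, Real.sqrt (gg t R) ^ 2 = gg t R :=
      fun t => Real.sq_sqrt (le_of_lt (gg_pos hball t))
    have key : ∀ i j, R i j = ∑ k ∈ Finset.image kk Finset.univ,
        Real.sqrt (gg (idx k) R) ^ 2 * vv (idx k) i * vv (idx k) j := by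
      intro i j
      rw [hsum]
      simp only [idx_kk, hsq]
      fin_cases i <;> fin_cases j <;>
        · simp [gg, vv, Fin.sum_univ_succ]
          first
            | ring1
            | linear_combination hsym 1 0
            | linear_combination hsym 2 0
            | linear_combination hsym 2 1
    refine ⟨?_, key⟩
    intro v hv
    have hvi : ∃ i, v i ≠ 0 := by
      by_contra hc
      push_neg at hc
      exact hv (funext fun i => hc i)
    have hq : ∑ i, ∑ j, v i * R i j * v j
        = ∑ t : Fin 9, gg t R * (∑ i, v i * vv t i) ^ 2 := by
      have h00 := key 0 0; have h01 := key 0 1; have h02 := key 0 2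
      have h10 := key 1 0; have h11 := key 1 1; have h12 := key 1 2
      have h20 := key 2 0; have h21 := key 2 1; have h22 := key 2 2
      rw [hsum] at h00 h01 h02 h10 h11 h12 h20 h21 h22
      simp only [idx_kk, hsq] at h00 h01 h02 h10 h11 h12 h20 h21 h22
      simp only [Fin.sum_univ_three, Fin.sum_univ_succ, Finset.sum_empty,
        Fin.sum_univ_zero, fsucc_0_1, fsucc_0_2, fsucc_1_2]
        at h00 h01 h02 h10 h11 h12 h20 h21 h22 ⊢
      simp only [vv, gg, Matrix.cons_val_zero, Matrix.cons_val_one,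
        Matrix.head_cons, Matrix.cons_val_succ, Matrix.cons_val_two,
        Matrix.tail_cons, fsucc_0_1, fsucc_0_2, fsucc_1_2] at h00 h01 h02 h10 h11 h12 h20 h21 h22 ⊢
      linear_combination v 0 * v 0 * h00 + v 0 * v 1 * h01 + v 0 * v 2 * h02 +
        v 1 * v 0 * h10 + v 1 * v 1 * h11 + v 1 * v 2 * h12 +
        v 2 * v 0 * h20 + v 2 * v 1 * h21 + v 2 * v 2 * h22
    rw [hq]
    obtain ⟨i, hi⟩ := hvi
    refine Finset.sum_pos' (fun t _ => mul_nonneg (gg_pos hball t).le (sq_nonneg _)) ?_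
    fin_cases i
    · refine ⟨0, Finset.mem_univ _, ?_⟩
      have hd : (∑ j, v j * vv 0 j) = v 0 := by simp [vv_0, Fin.sum_univ_three]
      rw [hd]
      exact mul_pos (gg_pos hball _) ((pow_ne_zero 2 hi).symm.lt_of_le (sq_nonneg _))
    · refine ⟨1, Finset.mem_univ _, ?_⟩
      have hd : (∑ j, v j * vv 1 j) = v 1 := by simp [vv_1, Fin.sum_univ_three]
      rw [hd]
      exact mul_pos (gg_pos hball _) ((pow_ne_zero 2 hi).symm.lt_of_le (sq_nonneg _))
    · refine ⟨2, Finset.mem_univ _, ?_⟩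
      have hd : (∑ j, v j * vv 2 j) = v 2 := by simp [vv_2, Fin.sum_univ_three]
      rw [hd]
      exact mul_pos (gg_pos hball _) ((pow_ne_zero 2 hi).symm.lt_of_le (sq_nonneg _))
end
end

section
/- Let 1 ≤ p < ∞ and Ω = [-1/2, 1/2]³ ⊂ ℝ³. There is a constant C, depending only on p, such that for every positive integer λ, every f ∈ C^∞(ℝ³) supported in Ω, and every smooth ℤ³-periodic function g : ℝ³ → ℝ, one has | ‖f · g(λ·)‖_{L^p(Ω)} − ‖f‖_{L^p(Ω)} ‖g‖_{L^p(𝕋³)} | ≤ C λ^{-1/p} ‖f‖_{C¹(Ω)} ‖g‖_{L^p(𝕋³)}. -/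
noncomputable section

open MeasureTheory Set

/-- The unit cube `Ω = [-1/2,1/2]³`. -/
def cubeΩ : Set V3 := {x | ∀ i, |x i| ≤ 1/2}

/-- The `L^p` norm (with real exponent `p`) of a scalar function over a set `s`. -/
def lpOn (p : ℝ) (s : Set V3) (h : V3 → ℝ) : ℝ :=
  (∫ x in s, |h x| ^ p) ^ (1/p)

/-- A function is `ℤ³`-periodic. -/
def ZPeriodic (g : V3 → ℝ) : Prop :=
  ∀ (x : V3) (m : Fin 3 → ℤ), g (x + fun i => (m i : ℝ)) = g x

/-- The `C¹` norm `sup (|f| + |∇f|)`. -/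
def c1Norm (f : V3 → ℝ) : ℝ :=
  ⨆ x : V3, (|f x| + ‖fderiv ℝ f x‖)

lemma aux_rpow_le_one_add {t r : ℝ} (ht : 0 ≤ t) (hr0 : 0 ≤ r) (hr1 : r ≤ 1) :
    t ^ r ≤ 1 + t := by
  rcases le_total t 1 with h | h
  · have := Real.rpow_le_one ht h hr0
    linarith
  · have h2 : t ^ r ≤ t ^ (1:ℝ) := Real.rpow_le_rpow_of_exponent_le h hr1
    rw [Real.rpow_one] at h2; linarith

lemma aux_add_rpow_le {u v r : ℝ} (hu : 0 ≤ u) (hv : 0 ≤ v) (hr0 : 0 ≤ r) (hr1 : r ≤ 1) :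
    (u + v) ^ r ≤ u ^ r + v ^ r := by
  have h := NNReal.rpow_add_le_add_rpow u.toNNReal v.toNNReal hr0 hr1
  have h' : (((u.toNNReal + v.toNNReal) ^ r : NNReal) : ℝ)
      ≤ ((u.toNNReal ^ r + v.toNNReal ^ r : NNReal) : ℝ) := NNReal.coe_le_coe.2 h
  simpa [NNReal.coe_rpow, Real.coe_toNNReal u hu, Real.coe_toNNReal v hv] using h'

lemma aux_abs_rpow_sub_rpow {x y r : ℝ} (hx : 0 ≤ x) (hy : 0 ≤ y) (hr0 : 0 ≤ r) (hr1 : r ≤ 1) :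
    |x ^ r - y ^ r| ≤ |x - y| ^ r := by
  have key : ∀ a b : ℝ, 0 ≤ a → 0 ≤ b → b ≤ a → a ^ r - b ^ r ≤ (a - b) ^ r := by
    intro a b ha hb hba
    have h1 : a ^ r ≤ (a - b) ^ r + b ^ r := by
      have := aux_add_rpow_le (u := a - b) (v := b) (by linarith) hb hr0 hr1
      rwa [sub_add_cancel] at this
    linarith
  rcases le_total y x with h | h
  · rw [abs_of_nonneg (sub_nonneg.2 (Real.rpow_le_rpow hy h hr0)),
      abs_of_nonneg (by linarith : (0:ℝ) ≤ x - y)]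
    exact key x y hx hy h
  · rw [abs_of_nonpos (sub_nonpos.2 (Real.rpow_le_rpow hx h hr0)),
      abs_of_nonpos (by linarith : x - y ≤ 0), neg_sub, neg_sub]
    exact key y x hy hx h

lemma aux_rpow_mvt {a b M p : ℝ} (ha : 0 ≤ a) (hb : 0 ≤ b) (haM : a ≤ M) (hbM : b ≤ M)
    (hp : 1 ≤ p) : |a ^ p - b ^ p| ≤ p * M ^ (p - 1) * |a - b| := by
  have hM : 0 ≤ M := le_trans ha haM
  have := Convex.norm_image_sub_le_of_norm_hasDerivWithin_le
    (f := fun t : ℝ => t ^ p) (f' := fun t => p * t ^ (p - 1)) (s := Icc 0 M)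
    (fun t _ => (Real.hasDerivAt_rpow_const (Or.inr hp)).hasDerivWithinAt)
    (fun t ht => by
      rw [Real.norm_eq_abs, abs_of_nonneg (mul_nonneg (by linarith) (Real.rpow_nonneg ht.1 _))]
      exact mul_le_mul_of_nonneg_left (Real.rpow_le_rpow ht.1 ht.2 (by linarith)) (by linarith))
    (convex_Icc 0 M) ⟨hb, hbM⟩ ⟨ha, haM⟩
  simpa [Real.norm_eq_abs] using this

set_option maxHeartbeats 1000000 in
/-- **Improved Hölder inequality** (Lemma A.3 of the paper, after Modena–Székelyhidi /
Cheskidov–Luo).  For `1 ≤ p < ∞` there is a constant `C = C(p)` such that for every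
positive integer `λ`, every smooth `f` supported in `Ω = [-1/2,1/2]³`, and every smooth
`ℤ³`-periodic `g`,
`| ‖f·g(λ·)‖_{L^p(Ω)} − ‖f‖_{L^p(Ω)} ‖g‖_{L^p(𝕋³)} | ≤ C λ^{-1/p} ‖f‖_{C¹} ‖g‖_{L^p(𝕋³)}`. -/
theorem improved_holder (p : ℝ) (hp : 1 ≤ p) :
    ∃ C : ℝ, 0 < C ∧
    ∀ lam : ℕ, 0 < lam →
    ∀ f : V3 → ℝ, ContDiff ℝ (⊤ : ℕ∞) f → tsupport f ⊆ cubeΩ →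
    ∀ g : V3 → ℝ, ContDiff ℝ (⊤ : ℕ∞) g → ZPeriodic g →
      |lpOn p cubeΩ (fun x => f x * g ((lam : ℝ) • x))
          - lpOn p cubeΩ f * lpOn p {x | ∀ i, 0 ≤ x i ∧ x i < 1} g|
        ≤ C * (lam : ℝ) ^ (-(1/p)) * c1Norm f
            * lpOn p {x | ∀ i, 0 ≤ x i ∧ x i < 1} g := by
  have hp0 : (0:ℝ) < p := lt_of_lt_of_le one_pos hp
  refine ⟨1 + 8 * p, by linarith, ?_⟩
  intro lam hlam f hf hfs g hg hgper
  set Q : Set V3 := {x | ∀ i, 0 ≤ x i ∧ x i < 1} with hQdef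
  set Nr : ℝ := (lam : ℝ) with hNrdef
  have hNr : (0:ℝ) < Nr := by rw [hNrdef]; exact_mod_cast hlam
  set φ : V3 → ℝ := fun x => |g x| ^ p with hφdef
  set F : V3 → ℝ := fun x => |f x| ^ p with hFdef
  set G : ℝ := ∫ x in Q, φ x with hGdef
  set c : ℝ := c1Norm f with hcdef
  -- measurability of basic sets
  have hQpi : Q = univ.pi (fun _ : Fin 3 => Ico (0:ℝ) 1) := by
    ext x; simp [hQdef, Set.mem_pi, mem_Ico]
  have hQmeas : MeasurableSet Q := by
    rw [hQpi]; exact MeasurableSet.univ_pi fun i => measurableSet_Ico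
  have hΩpi : cubeΩ = univ.pi (fun _ : Fin 3 => Icc (-(1/2):ℝ) (1/2)) := by
    ext x; simp only [cubeΩ, mem_setOf_eq, Set.mem_univ_pi, mem_Icc, abs_le]
  have hΩcomp : IsCompact cubeΩ := by
    rw [hΩpi]; exact isCompact_univ_pi fun i => isCompact_Icc
  have hΩclosed : IsClosed cubeΩ := hΩcomp.isClosed
  -- continuity
  have hfc : Continuous f := hf.continuous
  have hgc : Continuous g := hg.continuous
  have hφc : Continuous φ := hgc.abs.rpow_const fun x => Or.inr hp0.le
  have hFc : Continuous F := hfc.abs.rpow_const fun x => Or.inr hp0.le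
  have hφ0 : ∀ x, 0 ≤ φ x := fun x => Real.rpow_nonneg (abs_nonneg _) _
  have hF0 : ∀ x, 0 ≤ F x := fun x => Real.rpow_nonneg (abs_nonneg _) _
  have hG0 : (0:ℝ) ≤ G := setIntegral_nonneg hQmeas fun x _ => hφ0 x
  -- vanishing outside tsupport f
  have hfzero : ∀ x, x ∉ tsupport f → f x = 0 := fun x hx =>
    image_eq_zero_of_notMem_tsupport hx
  have hFzero : ∀ x, x ∉ tsupport f → F x = 0 := by
    intro x hx; simp [hFdef, hfzero x hx, Real.zero_rpow hp0.ne']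
  have hcs_of : ∀ u : V3 → ℝ, (∀ x, x ∉ tsupport f → u x = 0) → HasCompactSupport u := by
    intro u hu
    have hsub : tsupport u ⊆ cubeΩ := by
      refine closure_minimal (fun x hx => ?_) hΩclosed
      by_contra hxc
      exact hx (hu x fun hts => hxc (hfs hts))
    exact IsCompact.of_isClosed_subset hΩcomp (isClosed_tsupport u) hsub
  -- C¹ norm bounds
  have hfd : ∀ x, DifferentiableAt ℝ f x := fun x =>
    (hf.differentiable (by simp)).differentiableAt
  have hDfc : Continuous (fderiv ℝ f) := hf.continuous_fderiv (by simp)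
  have hDfzero : ∀ x, x ∉ tsupport f → fderiv ℝ f x = 0 := by
    intro x hx
    have hev : f =ᶠ[nhds x] 0 := notMem_tsupport_iff_eventuallyEq.1 hx
    rw [hev.fderiv_eq]
    exact fderiv_const_apply 0
  have hθcs : HasCompactSupport (fun x => |f x| + ‖fderiv ℝ f x‖) := by
    apply hcs_of
    intro x hx
    simp [hfzero x hx, hDfzero x hx]
  have hθbdd : BddAbove (range fun x => |f x| + ‖fderiv ℝ f x‖) :=
    (hfc.abs.add hDfc.norm).bddAbove_range_of_hasCompactSupport hθcs
  have hθle : ∀ x, |f x| + ‖fderiv ℝ f x‖ ≤ c := fun x => le_ciSup hθbdd x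
  have hMc : ∀ x, |f x| ≤ c := fun x => le_trans (le_add_of_nonneg_right (norm_nonneg _)) (hθle x)
  have hKc : ∀ x, ‖fderiv ℝ f x‖ ≤ c := fun x =>
    le_trans (le_add_of_nonneg_left (abs_nonneg _)) (hθle x)
  have hc0 : (0:ℝ) ≤ c := le_trans (abs_nonneg _) (hMc 0)
  -- Lipschitz bounds
  have hLipf : ∀ x y : V3, |f x - f y| ≤ c * ‖x - y‖ := by
    intro x y
    have := Convex.norm_image_sub_le_of_norm_fderiv_le (f := f) (s := (univ : Set V3))
      (fun z _ => hfd z) (fun z _ => hKc z) convex_univ (mem_univ y) (mem_univ x)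
    simpa [Real.norm_eq_abs] using this
  set Lc : ℝ := p * c ^ p with hLcdef
  have hLc0 : 0 ≤ Lc := mul_nonneg hp0.le (Real.rpow_nonneg hc0 _)
  have hLipF : ∀ x y : V3, |F x - F y| ≤ Lc * ‖x - y‖ := by
    intro x y
    rcases eq_or_lt_of_le hc0 with hc | hc
    · have hx0 : f x = 0 := by
        have := hMc x; rw [← hc] at this
        exact abs_eq_zero.1 (le_antisymm this (abs_nonneg _))
      have hy0 : f y = 0 := by
        have := hMc y; rw [← hc] at this
        exact abs_eq_zero.1 (le_antisymm this (abs_nonneg _))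
      simp [hFdef, hx0, hy0]
      positivity
    · calc |F x - F y| ≤ p * c ^ (p - 1) * abs (|f x| - |f y|) :=
            aux_rpow_mvt (abs_nonneg _) (abs_nonneg _) (hMc x) (hMc y) hp
      _ ≤ p * c ^ (p - 1) * |f x - f y| := by
            have h1 : abs (|f x| - |f y|) ≤ |f x - f y| := abs_abs_sub_abs_le_abs_sub _ _
            have h2 : 0 ≤ p * c ^ (p - 1) := mul_nonneg hp0.le (Real.rpow_nonneg hc0 _)
            exact mul_le_mul_of_nonneg_left h1 h2
      _ ≤ p * c ^ (p - 1) * (c * ‖x - y‖) := by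
            have h2 : 0 ≤ p * c ^ (p - 1) := mul_nonneg hp0.le (Real.rpow_nonneg hc0 _)
            exact mul_le_mul_of_nonneg_left (hLipf x y) h2
      _ = Lc * ‖x - y‖ := by
            rw [hLcdef, Real.rpow_sub_one hc.ne']
            field_simp
  -- integrability
  have hFcs : HasCompactSupport F := hcs_of F hFzero
  have hFint : Integrable F := hFc.integrable_of_hasCompactSupport hFcs
  set hfun : V3 → ℝ := fun x => F x * φ (Nr • x) with hhdef
  have hhc : Continuous hfun := hFc.mul (hφc.comp (continuous_const_smul Nr))
  have hhcs : HasCompactSupport hfun := hcs_of hfun (by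
    intro x hx; simp [hhdef, hFzero x hx])
  have hhint : Integrable hfun := hhc.integrable_of_hasCompactSupport hhcs
  set A : ℝ := ∫ x, hfun x with hAdef
  set B : ℝ := ∫ x, F x with hBdef
  have hA0 : 0 ≤ A := integral_nonneg fun x => mul_nonneg (hF0 x) (hφ0 _)
  have hB0 : 0 ≤ B := integral_nonneg fun x => hF0 x
  -- identify the lpOn quantities
  have houtside : ∀ x, x ∉ cubeΩ → F x = 0 := fun x hx =>
    hFzero x fun hts => hx (hfs hts)
  have h1 : lpOn p cubeΩ (fun x => f x * g ((lam : ℝ) • x)) = A ^ (1/p) := by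
    rw [lpOn]
    congr 1
    rw [hAdef]
    rw [show (∫ x in cubeΩ, |(fun x => f x * g ((lam : ℝ) • x)) x| ^ p) = ∫ x in cubeΩ, hfun x
      from by
        refine setIntegral_congr_fun (hΩpi ▸ MeasurableSet.univ_pi fun i => measurableSet_Icc) ?_
        intro x _
        simp only [hhdef, hFdef, hφdef]
        rw [abs_mul, Real.mul_rpow (abs_nonneg _) (abs_nonneg _)]]
    exact setIntegral_eq_integral_of_forall_compl_eq_zero fun x hx => by
      simp [hhdef, houtside x hx]
  have h2 : lpOn p cubeΩ f = B ^ (1/p) := by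
    rw [lpOn]
    congr 1
    rw [hBdef]
    exact setIntegral_eq_integral_of_forall_compl_eq_zero fun x hx => houtside x hx
  have h3 : lpOn p Q g = G ^ (1/p) := rfl
  rw [h1, h2, h3]
  -- the lattice partition
  set S : Finset (Fin 3 → ℤ) := Fintype.piFinset (fun _ : Fin 3 => Finset.Ico (-(lam:ℤ)) (lam:ℤ))
    with hSdef
  set Qk : (Fin 3 → ℤ) → Set V3 :=
    fun k => {x : V3 | ∀ i, (k i : ℝ) ≤ Nr * x i ∧ Nr * x i < (k i : ℝ) + 1} with hQkdef
  have hQkpi : ∀ k, Qk k = univ.pi (fun i => Ico ((k i : ℝ)/Nr) (((k i : ℝ)+1)/Nr)) := by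
    intro k; ext x
    simp only [hQkdef, mem_setOf_eq, Set.mem_univ_pi, mem_Ico, div_le_iff₀ hNr,
      lt_div_iff₀ hNr, mul_comm]
  have hQkmeas : ∀ k, MeasurableSet (Qk k) := fun k =>
    (hQkpi k) ▸ MeasurableSet.univ_pi fun i => measurableSet_Ico
  have hvol : ∀ k, volume (Qk k) = ENNReal.ofReal ((1/Nr)^3) := by
    intro k
    rw [hQkpi k, volume_pi_pi]
    have : ∀ i : Fin 3, volume (Ico ((k i : ℝ)/Nr) (((k i : ℝ)+1)/Nr))
        = ENNReal.ofReal (1/Nr) := by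
      intro i
      rw [Real.volume_Ico]
      congr 1
      field_simp
      ring
    simp only [this, Finset.prod_const, Finset.card_univ, Fintype.card_fin]
    rw [← ENNReal.ofReal_pow (by positivity)]
  have hvolR : ∀ k, (volume (Qk k)).toReal = (1/Nr)^3 := by
    intro k; rw [hvol k, ENNReal.toReal_ofReal (by positivity)]
  have hvolF : ∀ k, volume (Qk k) < ⊤ := fun k => by
    rw [hvol k]; exact ENNReal.ofReal_lt_top
  have hmemfloor : ∀ k (x : V3), x ∈ Qk k ↔ ∀ i, ⌊Nr * x i⌋ = k i := by
    intro k x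
    constructor
    · intro hx i
      exact Int.floor_eq_iff.2 ⟨(hx i).1, (hx i).2⟩
    · intro hx i
      have := Int.floor_eq_iff.1 (hx i)
      exact this
  have hdisj : (↑S : Set (Fin 3 → ℤ)).Pairwise (Function.onFun Disjoint Qk) := by
    intro k _ k' _ hne
    rw [Function.onFun, Set.disjoint_left]
    intro x hx hx'
    exact hne (funext fun i => ((hmemfloor k x).1 hx i).symm.trans ((hmemfloor k' x).1 hx' i))
  have hcover : cubeΩ ⊆ ⋃ k ∈ S, Qk k := by
    intro x hx
    have hxi := hx
    rw [hΩpi, Set.mem_univ_pi] at hxi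
    refine Set.mem_iUnion₂.2 ⟨fun i => ⌊Nr * x i⌋, ?_, ?_⟩
    · rw [hSdef, Fintype.mem_piFinset]
      intro i
      rw [Finset.mem_Ico]
      have h1 := (hxi i).1
      have h2 := (hxi i).2
      constructor
      · rw [Int.le_floor]
        push_cast
        nlinarith
      · rw [Int.floor_lt]
        push_cast
        nlinarith
    · rw [hmemfloor]
      intro i
      rfl
  -- translation invariance: integral of φ over any integer-translated unit cube is G
  have hφper : ∀ (x : V3) (m : Fin 3 → ℤ), φ (x + fun i => (m i : ℝ)) = φ x := by
    intro x m
    simp only [hφdef]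
    rw [hgper x m]
  have hrank : Module.finrank ℝ V3 = 3 := by
    simp [Module.finrank_fintype_fun_eq_card]
  set R : (Fin 3 → ℤ) → Set V3 :=
    fun k => {x : V3 | ∀ i, (k i : ℝ) ≤ x i ∧ x i < (k i : ℝ) + 1} with hRdef
  have hRpi : ∀ k, R k = univ.pi (fun i => Ico ((k i : ℝ)) ((k i : ℝ)+1)) := by
    intro k; ext x; simp [hRdef, Set.mem_univ_pi, mem_Ico]
  have hRmeas : ∀ k, MeasurableSet (R k) := fun k =>
    (hRpi k) ▸ MeasurableSet.univ_pi fun i => measurableSet_Ico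
  have hRint : ∀ k, ∫ x in R k, φ x = G := by
    intro k
    have hκ : ∀ x : V3, (R k).indicator φ (x + fun i => ((k i : ℤ) : ℝ)) = Q.indicator φ x := by
      intro x
      have hcoord : ∀ i, (x + fun i => ((k i : ℤ) : ℝ)) i = x i + (k i : ℝ) := fun i => rfl
      by_cases hx : x ∈ Q
      · have hxQ : ∀ i, 0 ≤ x i ∧ x i < 1 := hx
        have hmem : (x + fun i => ((k i : ℤ) : ℝ)) ∈ R k := by
          intro i
          rw [hcoord i]
          exact ⟨by linarith [(hxQ i).1], by linarith [(hxQ i).2]⟩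
        rw [indicator_of_mem hmem, indicator_of_mem hx]
        exact hφper x k
      · have hmem : (x + fun i => ((k i : ℤ) : ℝ)) ∉ R k := by
          intro hc
          apply hx
          intro i
          have := hc i
          rw [hcoord i] at this
          exact ⟨by linarith [this.1], by linarith [this.2]⟩
        rw [indicator_of_notMem hmem, indicator_of_notMem hx]
    calc ∫ x in R k, φ x = ∫ x, (R k).indicator φ x := (integral_indicator (hRmeas k)).symm
    _ = ∫ x, (R k).indicator φ (x + fun i => ((k i : ℤ) : ℝ)) :=
        (integral_add_right_eq_self _ _).symm
    _ = ∫ x, Q.indicator φ x := by simp only [hκ]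
    _ = G := integral_indicator hQmeas
  have hGk : ∀ k, ∫ x in Qk k, φ (Nr • x) = (1/Nr)^3 * G := by
    intro k
    have hind : ∀ x : V3,
        (R k).indicator φ (Nr • x) = (Qk k).indicator (fun y => φ (Nr • y)) x := by
      intro x
      by_cases hx : x ∈ Qk k
      · have hmem : Nr • x ∈ R k := fun i => hx i
        rw [indicator_of_mem hmem, indicator_of_mem hx]
      · have hmem : Nr • x ∉ R k := fun hc => hx fun i => hc i
        rw [indicator_of_notMem hmem, indicator_of_notMem hx]
    calc ∫ x in Qk k, φ (Nr • x) = ∫ x, (Qk k).indicator (fun y => φ (Nr • y)) x :=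
          (integral_indicator (hQkmeas k)).symm
    _ = ∫ x, (R k).indicator φ (Nr • x) := by simp only [hind]
    _ = (Nr ^ Module.finrank ℝ V3)⁻¹ • ∫ x, (R k).indicator φ x :=
          Measure.integral_comp_smul_of_nonneg volume ((R k).indicator φ) Nr (hR := hNr.le)
    _ = (1/Nr)^3 * G := by
          rw [hrank, integral_indicator (hRmeas k), hRint k, smul_eq_mul, one_div, inv_pow]
  -- integrability on cubes
  have hQkint : ∀ k (u : V3 → ℝ), Continuous u → IntegrableOn u (Qk k) := by
    intro k u hu
    have hcomp : IsCompact (univ.pi (fun i => Icc ((k i : ℝ)/Nr) (((k i : ℝ)+1)/Nr))) :=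
      isCompact_univ_pi fun i => isCompact_Icc
    refine (hu.continuousOn.integrableOn_compact hcomp).mono_set ?_
    rw [hQkpi k]
    exact Set.pi_mono fun i _ => Ico_subset_Icc_self
  have hφNc : Continuous (fun x : V3 => φ (Nr • x)) := hφc.comp (continuous_const_smul Nr)
  -- points of the same cube are 1/Nr-close
  have hdist : ∀ k (x y : V3), x ∈ Qk k → y ∈ Qk k → ‖x - y‖ ≤ 1/Nr := by
    intro k x y hx hy
    rw [pi_norm_le_iff_of_nonneg (by positivity)]
    intro i
    have h1 := hx i
    have h2 := hy i
    have hc : (x - y) i = x i - y i := rfl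
    rw [hc, Real.norm_eq_abs, abs_le]
    obtain ⟨h1a, h1b⟩ := h1
    obtain ⟨h2a, h2b⟩ := h2
    constructor
    · rw [neg_le, neg_sub, le_div_iff₀ hNr]
      have e : (y i - x i) * Nr = Nr * y i - Nr * x i := by ring
      rw [e]; linarith
    · rw [le_div_iff₀ hNr]
      have e : (x i - y i) * Nr = Nr * x i - Nr * y i := by ring
      rw [e]; linarith
  -- the average of F over a cube is close to its values
  have havg : ∀ k, ∀ x ∈ Qk k, |F x * (1/Nr)^3 - ∫ y in Qk k, F y| ≤ (Lc/Nr) * (1/Nr)^3 := by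
    intro k x hx
    have hsub : F x * (1/Nr)^3 - ∫ y in Qk k, F y = ∫ y in Qk k, (F x - F y) := by
      rw [integral_sub (integrableOn_const (C := F x) (hvolF k).ne) (hFint.integrableOn),
        setIntegral_const, measureReal_def, hvolR k, smul_eq_mul]
      ring
    rw [hsub]
    have hb : ∀ y ∈ Qk k, ‖F x - F y‖ ≤ Lc/Nr := by
      intro y hy
      rw [Real.norm_eq_abs]
      calc |F x - F y| ≤ Lc * ‖x - y‖ := hLipF x y
      _ ≤ Lc * (1/Nr) := mul_le_mul_of_nonneg_left (hdist k x y hx hy) hLc0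
      _ = Lc/Nr := by ring
    have hmeas : AEStronglyMeasurable (fun y => F x - F y) (volume.restrict (Qk k)) :=
      (continuous_const.sub hFc).aestronglyMeasurable
    have hest := norm_setIntegral_le_of_norm_le_const (hvolF k) hb
    rw [Real.norm_eq_abs, measureReal_def, hvolR k] at hest
    exact hest
  -- per-cube estimate
  have hper : ∀ k, |(∫ x in Qk k, hfun x) - (∫ x in Qk k, F x) * G|
      ≤ (Lc/Nr) * ((1/Nr)^3 * G) := by
    intro k
    set Ik : ℝ := ∫ x in Qk k, F x with hIkdef
    set ck : ℝ := Nr^3 * Ik with hckdef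
    have hckb : ∀ x ∈ Qk k, |F x - ck| ≤ Lc/Nr := by
      intro x hx
      have h1 := havg k x hx
      have e : F x - ck = Nr^3 * (F x * (1/Nr)^3 - Ik) := by
        rw [hckdef]; field_simp
      rw [e, abs_mul, abs_of_nonneg (by positivity : (0:ℝ) ≤ Nr^3)]
      calc Nr^3 * |F x * (1/Nr)^3 - Ik| ≤ Nr^3 * ((Lc/Nr) * (1/Nr)^3) :=
            mul_le_mul_of_nonneg_left h1 (by positivity)
      _ = Lc/Nr := by field_simp
    have hckG : ck * ((1/Nr)^3 * G) = Ik * G := by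
      rw [hckdef]; field_simp
    have hsplit : (∫ x in Qk k, hfun x) - Ik * G = ∫ x in Qk k, (F x - ck) * φ (Nr • x) := by
      calc (∫ x in Qk k, hfun x) - Ik * G
          = (∫ x in Qk k, hfun x) - ck * ((1/Nr)^3 * G) := by rw [hckG]
        _ = (∫ x in Qk k, hfun x) - ck * (∫ x in Qk k, φ (Nr • x)) := by rw [hGk k]
        _ = (∫ x in Qk k, hfun x) - (∫ x in Qk k, ck * φ (Nr • x)) := by
              rw [integral_const_mul]
        _ = ∫ x in Qk k, (hfun x - ck * φ (Nr • x)) :=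
              (integral_sub (hhint.integrableOn) ((hQkint k _ hφNc).const_mul ck)).symm
        _ = ∫ x in Qk k, (F x - ck) * φ (Nr • x) := by
              refine setIntegral_congr_fun (hQkmeas k) fun x _ => ?_
              simp only [hhdef]
              ring
    rw [hsplit]
    calc |∫ x in Qk k, (F x - ck) * φ (Nr • x)|
        ≤ ∫ x in Qk k, |F x - ck| * |φ (Nr • x)| := by
          simpa [Real.norm_eq_abs] using
            norm_integral_le_integral_norm (μ := volume.restrict (Qk k))
              (f := fun x => (F x - ck) * φ (Nr • x))
      _ ≤ ∫ x in Qk k, (Lc/Nr) * φ (Nr • x) := by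
          refine setIntegral_mono_on ?_ ?_ (hQkmeas k) ?_
          · exact hQkint k _ ((hFc.sub continuous_const).abs.mul hφNc.abs)
          · exact (hQkint k _ hφNc).const_mul _
          · intro x hx
            rw [abs_of_nonneg (hφ0 _)]
            exact mul_le_mul_of_nonneg_right (hckb x hx) (hφ0 _)
      _ = (Lc/Nr) * ((1/Nr)^3 * G) := by rw [integral_const_mul, hGk k]
  -- summation over the partition
  have hcard : (S.card : ℝ) = (2 * Nr)^3 := by
    rw [hSdef, Fintype.card_piFinset]
    simp only [Int.card_Ico, sub_neg_eq_add]
    have h2 : ((lam:ℤ) + lam).toNat = 2 * lam := by omega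
    rw [h2, Finset.prod_const, Finset.card_univ, Fintype.card_fin]
    push_cast
    ring
  have hAsum : A = ∑ k ∈ S, ∫ x in Qk k, hfun x := by
    have hvanish : ∀ x, x ∉ (⋃ k ∈ S, Qk k) → hfun x = 0 := by
      intro x hx
      have hxo : x ∉ cubeΩ := fun hc => hx (hcover hc)
      simp [hhdef, houtside x hxo]
    rw [hAdef, ← setIntegral_eq_integral_of_forall_compl_eq_zero hvanish,
      integral_biUnion_finset S (fun k _ => hQkmeas k) hdisj (fun k _ => hhint.integrableOn)]
  have hBsum : B = ∑ k ∈ S, ∫ x in Qk k, F x := by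
    have hvanish : ∀ x, x ∉ (⋃ k ∈ S, Qk k) → F x = 0 := by
      intro x hx
      exact houtside x fun hc => hx (hcover hc)
    rw [hBdef, ← setIntegral_eq_integral_of_forall_compl_eq_zero hvanish,
      integral_biUnion_finset S (fun k _ => hQkmeas k) hdisj (fun k _ => hFint.integrableOn)]
  have hABG : |A - B * G| ≤ 8 * Lc * G / Nr := by
    have hBG : B * G = ∑ k ∈ S, (∫ x in Qk k, F x) * G := by rw [hBsum, Finset.sum_mul]
    rw [hAsum, hBG, ← Finset.sum_sub_distrib]
    calc |∑ k ∈ S, ((∫ x in Qk k, hfun x) - (∫ x in Qk k, F x) * G)|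
        ≤ ∑ k ∈ S, |(∫ x in Qk k, hfun x) - (∫ x in Qk k, F x) * G| :=
          Finset.abs_sum_le_sum_abs _ _
      _ ≤ ∑ k ∈ S, (Lc/Nr) * ((1/Nr)^3 * G) := Finset.sum_le_sum fun k _ => hper k
      _ = S.card * ((Lc/Nr) * ((1/Nr)^3 * G)) := by rw [Finset.sum_const, nsmul_eq_mul]
      _ = 8 * Lc * G / Nr := by rw [hcard]; field_simp; ring
  -- final assembly
  have h1p0 : (0:ℝ) ≤ 1/p := by positivity
  have h1p1 : 1/p ≤ 1 := by rw [div_le_one hp0]; exact hp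
  have hABG' : |A - B * G| ≤ 8 * p * (c ^ p * (G * Nr⁻¹)) := by
    refine hABG.trans_eq ?_
    rw [hLcdef]
    field_simp
  have hcp : (c ^ p) ^ (1/p) = c := by
    rw [← Real.rpow_mul hc0, mul_one_div, div_self hp0.ne', Real.rpow_one]
  have hinv : (Nr⁻¹) ^ ((1:ℝ)/p) = Nr ^ (-(1/p)) := by
    rw [Real.rpow_neg hNr.le, ← Real.inv_rpow hNr.le]
  rw [← Real.mul_rpow hB0 hG0]
  calc |A ^ (1/p) - (B * G) ^ (1/p)|
      ≤ |A - B * G| ^ (1/p) := aux_abs_rpow_sub_rpow hA0 (mul_nonneg hB0 hG0) h1p0 h1p1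
    _ ≤ (8 * p * (c ^ p * (G * Nr⁻¹))) ^ (1/p) :=
        Real.rpow_le_rpow (abs_nonneg _) hABG' h1p0
    _ = (8*p) ^ ((1:ℝ)/p) * (c * (G ^ ((1:ℝ)/p) * Nr ^ (-(1/p)))) := by
        rw [Real.mul_rpow (by positivity) (by positivity),
          Real.mul_rpow (Real.rpow_nonneg hc0 p) (by positivity),
          Real.mul_rpow hG0 (by positivity), hcp, hinv]
    _ ≤ (1 + 8*p) * (c * (G ^ ((1:ℝ)/p) * Nr ^ (-(1/p)))) := by
        refine mul_le_mul_of_nonneg_right (aux_rpow_le_one_add (by positivity) h1p0 h1p1) ?_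
        have : (0:ℝ) ≤ Nr ^ (-(1/p)) := Real.rpow_nonneg hNr.le _
        positivity
    _ = (1 + 8 * p) * Nr ^ (-(1/p)) * c * G ^ (1/p) := by ring
end
end
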